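/- arXiv:2105.04924 — 4 statements merged into one kernel-verified Lean document; each statement's English description precedes it below -/
import Mathlib

section
/- If v_ℓ is a right singular vector of A with singular value σ_ℓ (so A^T A v_ℓ = σ_ℓ^2 v_ℓ), then for the RK step z_k = z_{k-1} - (A_{(j)}^T z_{k-1}/||A_{(j)}||^2) A_{(j)} with column j chosen with probability ||A_{(j)}||^2/||A||_F^2, one has E_{k-1}[⟨z_k - w, A v_ℓ⟩] = (1 - σ_ℓ^2/||A||_F^2) ⟨z_{k-1} - w, A v_ℓ⟩ for any vector w with A^T w = 0. -/
open Matrix BigOperators Finset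

noncomputable def frob2 {m n : ℕ} (A : Matrix (Fin m) (Fin n) ℝ) : ℝ :=
  ∑ i, ∑ j, (A i j) ^ 2

noncomputable def colNorm2 {m n : ℕ} (A : Matrix (Fin m) (Fin n) ℝ) (j : Fin n) : ℝ :=
  ∑ i, (A i j) ^ 2

noncomputable def colStep {m n : ℕ} (A : Matrix (Fin m) (Fin n) ℝ) (j : Fin n)
    (z : Fin m → ℝ) : Fin m → ℝ :=
  z - ((Aᵀ j ⬝ᵥ z) / colNorm2 A j) • Aᵀ j

/-
Weighting the step along column `j` by `‖A_(j)‖²` clears its denominator, so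
`∑ⱼ ‖A_(j)‖² z_k(j) = ‖A‖_F² z - A Aᵀ z`. Pairing with `A v` and using
`⟨A Aᵀ z, A v⟩ = ⟨z, A (Aᵀ A v)⟩ = σ² ⟨z, A v⟩`, together with `⟨w, A v⟩ = ⟨Aᵀ w, v⟩ = 0`,
gives the contraction factor `1 - σ²/‖A‖_F²`.
-/

lemma colNorm2_eq_dotProduct {m n : ℕ} (A : Matrix (Fin m) (Fin n) ℝ) (j : Fin n) :
    colNorm2 A j = Aᵀ j ⬝ᵥ Aᵀ j := by
  simp only [colNorm2, dotProduct, transpose_apply, sq]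

lemma frob2_eq_sum_colNorm2 {m n : ℕ} (A : Matrix (Fin m) (Fin n) ℝ) :
    frob2 A = ∑ j, colNorm2 A j :=
  Finset.sum_comm

lemma colNorm2_nonneg {m n : ℕ} (A : Matrix (Fin m) (Fin n) ℝ) (j : Fin n) :
    0 ≤ colNorm2 A j :=
  sum_nonneg fun _ _ => sq_nonneg _

lemma colNorm2_eq_zero_iff {m n : ℕ} (A : Matrix (Fin m) (Fin n) ℝ) (j : Fin n) :
    colNorm2 A j = 0 ↔ Aᵀ j = 0 := by
  rw [colNorm2_eq_dotProduct, dotProduct_self_eq_zero]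

lemma frob2_ne_zero {m n : ℕ} {A : Matrix (Fin m) (Fin n) ℝ} (hA : A ≠ 0) : frob2 A ≠ 0 := by
  contrapose! hA
  rw [frob2_eq_sum_colNorm2, sum_eq_zero_iff_of_nonneg fun j _ => colNorm2_nonneg A j] at hA
  ext i j
  simpa using congrFun ((colNorm2_eq_zero_iff A j).mp (hA j (mem_univ j))) i

-- For a zero column `colStep` divides by `0`, but then `Aᵀ j = 0` and both sides agree anyway.
lemma colNorm2_smul_colStep {m n : ℕ} (A : Matrix (Fin m) (Fin n) ℝ) (j : Fin n)
    (z : Fin m → ℝ) :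
    colNorm2 A j • colStep A j z = colNorm2 A j • z - (Aᵀ j ⬝ᵥ z) • Aᵀ j := by
  by_cases hj : colNorm2 A j = 0
  · simp [hj, (colNorm2_eq_zero_iff A j).mp hj]
  · rw [colStep, smul_sub, smul_smul, mul_div_cancel₀ _ hj]

lemma sum_colNorm2_smul_colStep {m n : ℕ} (A : Matrix (Fin m) (Fin n) ℝ) (z : Fin m → ℝ) :
    ∑ j, colNorm2 A j • colStep A j z = frob2 A • z - A *ᵥ (Aᵀ *ᵥ z) := by
  simp only [colNorm2_smul_colStep, sum_sub_distrib, ← sum_smul, ← frob2_eq_sum_colNorm2]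
  rw [← vecMul_transpose, vecMul_eq_sum]
  rfl

lemma dotProduct_mulVec_eq_transpose {m n : ℕ} (A : Matrix (Fin m) (Fin n) ℝ)
    (x : Fin m → ℝ) (y : Fin n → ℝ) : x ⬝ᵥ (A *ᵥ y) = (Aᵀ *ᵥ x) ⬝ᵥ y := by
  rw [dotProduct_mulVec, mulVec_transpose]

theorem rek_colstep_singular_contraction_general {m n : ℕ}
    (A : Matrix (Fin m) (Fin n) ℝ) (hA : A ≠ 0)
    (σ : ℝ) (v : Fin n → ℝ)
    (hv : Aᵀ *ᵥ (A *ᵥ v) = σ ^ 2 • v)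
    (w : Fin m → ℝ) (hw : Aᵀ *ᵥ w = 0)
    (z : Fin m → ℝ) :
    ∑ j : Fin n, (colNorm2 A j / frob2 A) * ((colStep A j z - w) ⬝ᵥ (A *ᵥ v))
      = (1 - σ ^ 2 / frob2 A) * ((z - w) ⬝ᵥ (A *ᵥ v)) := by
  have hw_perp : w ⬝ᵥ (A *ᵥ v) = 0 := by
    rw [dotProduct_mulVec_eq_transpose, hw, zero_dotProduct]
  have hz : (A *ᵥ (Aᵀ *ᵥ z)) ⬝ᵥ (A *ᵥ v) = σ ^ 2 * ((z - w) ⬝ᵥ (A *ᵥ v)) := by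
    rw [dotProduct_comm, dotProduct_mulVec_eq_transpose, hv, smul_dotProduct, dotProduct_comm,
      ← dotProduct_mulVec_eq_transpose, sub_dotProduct, hw_perp, sub_zero, smul_eq_mul]
  have hsum : ∑ j, colNorm2 A j • (colStep A j z - w)
      = frob2 A • (z - w) - A *ᵥ (Aᵀ *ᵥ z) := by
    simp only [smul_sub, sum_sub_distrib, ← sum_smul, sum_colNorm2_smul_colStep,
      ← frob2_eq_sum_colNorm2]
    abel
  calc ∑ j, (colNorm2 A j / frob2 A) * ((colStep A j z - w) ⬝ᵥ (A *ᵥ v))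
      = ((∑ j, colNorm2 A j • (colStep A j z - w)) ⬝ᵥ (A *ᵥ v)) / frob2 A := by
        simp only [sum_dotProduct, smul_dotProduct, smul_eq_mul, sum_div, div_mul_eq_mul_div]
    _ = (1 - σ ^ 2 / frob2 A) * ((z - w) ⬝ᵥ (A *ᵥ v)) := by
        rw [hsum, sub_dotProduct, smul_dotProduct, hz, smul_eq_mul]
        field_simp [frob2_ne_zero hA]

/-- if `Aᵀ A vℓ = σℓ² vℓ` and `Aᵀ w = 0`, then one RK step on `Aᵀ z = 0`
satisfies `E[⟨z_k - w, A vℓ⟩] = (1 - σℓ²/‖A‖_F²) ⟨z_{k-1} - w, A vℓ⟩`. -/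
theorem rek_colstep_singular_contraction {m n : ℕ}
    (A : Matrix (Fin m) (Fin n) ℝ) (hA : A ≠ 0)
    (σ : ℝ) (hσ : 0 ≤ σ) (v : Fin n → ℝ)
    (hv : Aᵀ *ᵥ (A *ᵥ v) = σ ^ 2 • v)
    (w : Fin m → ℝ) (hw : Aᵀ *ᵥ w = 0)
    (z : Fin m → ℝ) :
    ∑ j : Fin n, (colNorm2 A j / frob2 A) * ((colStep A j z - w) ⬝ᵥ (A *ᵥ v))
      = (1 - σ ^ 2 / frob2 A) * ((z - w) ⬝ᵥ (A *ᵥ v)) :=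
  rek_colstep_singular_contraction_general A hA σ v hv w hw z
end

section
/- For the randomized Kaczmarz method applied to a consistent system A x = b (b = A x_⋆) with rows sampled with probability proportional to squared row norms, if v_ℓ is a right singular vector of A with singular value σ_ℓ, then E[⟨x_k - x_⋆, v_ℓ⟩] = (1 - σ_ℓ^2/||A||_F^2)^k ⟨x_0 - x_⋆, v_ℓ⟩. -/
open Matrix BigOperators Finset

noncomputable def rowNorm2 {m n : ℕ} (A : Matrix (Fin m) (Fin n) ℝ) (i : Fin m) : ℝ :=
  ∑ j, (A i j) ^ 2

noncomputable def rkStep {m n : ℕ} (A : Matrix (Fin m) (Fin n) ℝ)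
    (b : Fin m → ℝ) (i : Fin m) (x : Fin n → ℝ) : Fin n → ℝ :=
  x - ((A i ⬝ᵥ x - b i) / rowNorm2 A i) • A i

noncomputable def xIter {m n : ℕ} (A : Matrix (Fin m) (Fin n) ℝ)
    (b : Fin m → ℝ) (x0 : Fin n → ℝ) : List (Fin m) → Fin n → ℝ
  | [] => x0
  | i :: l => rkStep A b i (xIter A b x0 l)

lemma rowNorm2_nonneg {m n : ℕ} (A : Matrix (Fin m) (Fin n) ℝ) (i : Fin m) :
    0 ≤ rowNorm2 A i := Finset.sum_nonneg fun _ _ => sq_nonneg _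

lemma row_eq_zero {m n : ℕ} (A : Matrix (Fin m) (Fin n) ℝ) (i : Fin m)
    (h : rowNorm2 A i = 0) (j : Fin n) : A i j = 0 := by
  have := (Finset.sum_eq_zero_iff_of_nonneg (fun j _ => sq_nonneg (A i j))).mp h j (mem_univ j)
  exact pow_eq_zero_iff (n := 2) (by norm_num) |>.mp this

lemma frob2_pos {m n : ℕ} (A : Matrix (Fin m) (Fin n) ℝ) (hA : A ≠ 0) :
    0 < frob2 A := by
  have h : 0 ≤ frob2 A := Finset.sum_nonneg fun i _ => rowNorm2_nonneg A i
  rcases h.lt_or_eq with h | h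
  · exact h
  · exfalso; apply hA
    ext i j
    have h1 := (Finset.sum_eq_zero_iff_of_nonneg
      (fun i _ => rowNorm2_nonneg A i)).mp h.symm i (mem_univ i)
    exact row_eq_zero A i h1 j

lemma rk_one_step {m n : ℕ} (A : Matrix (Fin m) (Fin n) ℝ) (hA : A ≠ 0)
    (σ : ℝ) (v : Fin n → ℝ) (hv : Aᵀ *ᵥ (A *ᵥ v) = σ ^ 2 • v)
    (xs y : Fin n → ℝ) :
    ∑ i, (rowNorm2 A i / frob2 A) * ((rkStep A (A *ᵥ xs) i y - xs) ⬝ᵥ v)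
      = (1 - σ ^ 2 / frob2 A) * ((y - xs) ⬝ᵥ v) := by
  have hF := frob2_pos A hA
  have key : ∀ i, (rowNorm2 A i / frob2 A) * ((rkStep A (A *ᵥ xs) i y - xs) ⬝ᵥ v)
      = (rowNorm2 A i / frob2 A) * ((y - xs) ⬝ᵥ v)
        - (A i ⬝ᵥ (y - xs)) * (A i ⬝ᵥ v) / frob2 A := by
    intro i
    have hstep : rkStep A (A *ᵥ xs) i y - xs
        = (y - xs) - ((A i ⬝ᵥ (y - xs)) / rowNorm2 A i) • A i := by
      funext j
      simp [rkStep, mulVec, dotProduct, Finset.sum_sub_distrib]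
      simp only [mul_sub, Finset.sum_sub_distrib]
      ring
    rw [hstep, sub_dotProduct, smul_dotProduct, smul_eq_mul]
    rcases eq_or_ne (rowNorm2 A i) 0 with h0 | h0
    · have hz : A i ⬝ᵥ (y - xs) = 0 := by
        simp [dotProduct, row_eq_zero A i h0]
      simp [h0, hz]
    · field_simp
  simp only [key]
  rw [Finset.sum_sub_distrib, ← Finset.sum_mul, ← Finset.sum_div, ← Finset.sum_div]
  have hsum : ∑ i, rowNorm2 A i = frob2 A := rfl
  have hdot : ∑ i, (A i ⬝ᵥ (y - xs)) * (A i ⬝ᵥ v) = σ ^ 2 * ((y - xs) ⬝ᵥ v) := by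
    have h1 : ∑ i, (A i ⬝ᵥ (y - xs)) * (A i ⬝ᵥ v) = (A *ᵥ (y - xs)) ⬝ᵥ (A *ᵥ v) := by
      simp [dotProduct, mulVec]
    have h2 : (y - xs) ⬝ᵥ (Aᵀ *ᵥ (A *ᵥ v)) = (A *ᵥ (y - xs)) ⬝ᵥ (A *ᵥ v) := by
      rw [dotProduct_mulVec, vecMul_transpose]
    rw [h1, ← h2, hv, dotProduct_smul, smul_eq_mul]
  rw [hsum, hdot, div_self hF.ne']
  field_simp

/-- for the RK method on a consistent system `A x = b` (`b = A x⋆`)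
with rows sampled i.i.d. with probability `‖A^{(i)}‖²/‖A‖_F²`, if `Aᵀ A vℓ = σℓ² vℓ`
then `E[⟨x_k - x⋆, vℓ⟩] = (1 - σℓ²/‖A‖_F²)^k ⟨x_0 - x⋆, vℓ⟩`. -/
theorem rk_iter_expectation_consistent {m n : ℕ}
    (A : Matrix (Fin m) (Fin n) ℝ) (hA : A ≠ 0)
    (σ : ℝ) (hσ : 0 ≤ σ) (v : Fin n → ℝ)
    (hv : Aᵀ *ᵥ (A *ᵥ v) = σ ^ 2 • v)
    (b : Fin m → ℝ) (xs : Fin n → ℝ) (hb : b = A *ᵥ xs)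
    (x0 : Fin n → ℝ) (k : ℕ) :
    ∑ ω : Fin k → Fin m,
        (∏ t, rowNorm2 A (ω t) / frob2 A)
          * ((xIter A b x0 (List.ofFn ω) - xs) ⬝ᵥ v)
      = (1 - σ ^ 2 / frob2 A) ^ k * ((x0 - xs) ⬝ᵥ v) := by
  subst hb
  induction k with
  | zero => simp [xIter]
  | succ k ih =>
    rw [← Equiv.sum_comp (Fin.consEquiv fun _ => Fin m), Fintype.sum_prod_type]
    have step : ∀ (i : Fin m) (ω' : Fin k → Fin m),
        (∏ t, rowNorm2 A ((Fin.consEquiv fun _ => Fin m) (i, ω') t) / frob2 A)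
          * ((xIter A (A *ᵥ xs) x0 (List.ofFn ((Fin.consEquiv fun _ => Fin m) (i, ω'))) - xs) ⬝ᵥ v)
        = ((rowNorm2 A i / frob2 A) * ∏ t, rowNorm2 A (ω' t) / frob2 A)
          * ((rkStep A (A *ᵥ xs) i (xIter A (A *ᵥ xs) x0 (List.ofFn ω')) - xs) ⬝ᵥ v) := by
      intro i ω'
      have h1 : List.ofFn ((Fin.consEquiv fun _ => Fin m) (i, ω')) = i :: List.ofFn ω' := by
        simp [Fin.consEquiv, List.ofFn_succ]
      rw [h1, Fin.prod_univ_succ]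
      simp [xIter, Fin.consEquiv]
    simp only [step]
    rw [Finset.sum_comm]
    have inner : ∀ ω' : Fin k → Fin m,
        ∑ i, ((rowNorm2 A i / frob2 A) * ∏ t, rowNorm2 A (ω' t) / frob2 A)
          * ((rkStep A (A *ᵥ xs) i (xIter A (A *ᵥ xs) x0 (List.ofFn ω')) - xs) ⬝ᵥ v)
        = (1 - σ ^ 2 / frob2 A) * ((∏ t, rowNorm2 A (ω' t) / frob2 A)
            * ((xIter A (A *ᵥ xs) x0 (List.ofFn ω') - xs) ⬝ᵥ v)) := by
      intro ω'
      have h2 : ∑ i, ((rowNorm2 A i / frob2 A) * ∏ t, rowNorm2 A (ω' t) / frob2 A)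
          * ((rkStep A (A *ᵥ xs) i (xIter A (A *ᵥ xs) x0 (List.ofFn ω')) - xs) ⬝ᵥ v)
          = (∏ t, rowNorm2 A (ω' t) / frob2 A)
            * ∑ i, (rowNorm2 A i / frob2 A)
              * ((rkStep A (A *ᵥ xs) i (xIter A (A *ᵥ xs) x0 (List.ofFn ω')) - xs) ⬝ᵥ v) := by
        rw [Finset.mul_sum]
        exact Finset.sum_congr rfl fun i _ => by ring
      rw [h2, rk_one_step A hA σ v hv xs]
      ring
    simp only [inner]
    rw [← Finset.mul_sum, ih, pow_succ]
    ring
end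

section
/- For the one-step RK update x̂_k = x_{k-1} - ((A^{(i)} x_{k-1} - A^{(i)} x_⋆)/||A^{(i)}||^2)(A^{(i)})^T with row i chosen with probability ||A^{(i)}||^2/||A||_F^2, the conditional expectation of the squared error satisfies E_{k-1}[||x̂_k - x_⋆||^2] = (x_{k-1} - x_⋆)^T (I - A^T A/||A||_F^2)(x_{k-1} - x_⋆) = ||x_{k-1} - x_⋆||^2 - ||A(x_{k-1} - x_⋆)||^2/||A||_F^2. -/
open Matrix BigOperators Finset

/-- One RK step for `A x = A x⋆` using row `i`. -/
noncomputable def projStep {m n : ℕ} (A : Matrix (Fin m) (Fin n) ℝ)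
    (xs : Fin n → ℝ) (i : Fin m) (x : Fin n → ℝ) : Fin n → ℝ :=
  x - ((A i ⬝ᵥ (x - xs)) / rowNorm2 A i) • A i

lemma rowNorm2_eq_zero_iff {m n : ℕ} (A : Matrix (Fin m) (Fin n) ℝ) (i : Fin m) :
    rowNorm2 A i = 0 ↔ A i = 0 := by
  constructor
  · intro h
    funext j
    have := (Finset.sum_eq_zero_iff_of_nonneg (fun j _ => sq_nonneg (A i j))).mp h j
      (Finset.mem_univ j)
    exact (pow_eq_zero_iff two_ne_zero).mp this
  · intro h
    simp [rowNorm2, h]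

/-- conditional expectation of the squared error of one RK step on
`A x = A x⋆`:
`E[‖x̂_k - x⋆‖²] = (x_{k-1}-x⋆)ᵀ(I - AᵀA/‖A‖_F²)(x_{k-1}-x⋆)
  = ‖x_{k-1}-x⋆‖² - ‖A(x_{k-1}-x⋆)‖²/‖A‖_F²`. -/
theorem rk_rowstep_squared_error {m n : ℕ}
    (A : Matrix (Fin m) (Fin n) ℝ) (hA : A ≠ 0)
    (xs x : Fin n → ℝ) :
    (∑ i : Fin m, (rowNorm2 A i / frob2 A)
        * ((projStep A xs i x - xs) ⬝ᵥ (projStep A xs i x - xs)))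
      = (x - xs) ⬝ᵥ ((x - xs) - (1 / frob2 A) • (Aᵀ *ᵥ (A *ᵥ (x - xs))))
    ∧ (∑ i : Fin m, (rowNorm2 A i / frob2 A)
        * ((projStep A xs i x - xs) ⬝ᵥ (projStep A xs i x - xs)))
      = (x - xs) ⬝ᵥ (x - xs)
        - (1 / frob2 A) * ((A *ᵥ (x - xs)) ⬝ᵥ (A *ᵥ (x - xs))) := by
  set e : Fin n → ℝ := x - xs with he
  clear_value e
  have hfrob : frob2 A = ∑ i, rowNorm2 A i := rfl
  have hF : frob2 A ≠ 0 := by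
    intro h
    apply hA
    ext i j
    have hi : rowNorm2 A i = 0 := by
      have := (Finset.sum_eq_zero_iff_of_nonneg
        (fun i _ => Finset.sum_nonneg fun j _ => sq_nonneg (A i j))).mp h i (Finset.mem_univ i)
      exact this
    have := (rowNorm2_eq_zero_iff A i).mp hi
    simp [this]
  have key : ∀ i, (rowNorm2 A i / frob2 A)
        * ((projStep A xs i x - xs) ⬝ᵥ (projStep A xs i x - xs))
      = rowNorm2 A i / frob2 A * (e ⬝ᵥ e) - (A i ⬝ᵥ e) ^ 2 / frob2 A := by
    intro i
    have hstep : projStep A xs i x - xs = e - ((A i ⬝ᵥ e) / rowNorm2 A i) • A i := by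
      funext j; simp [projStep, he]; ring
    rcases eq_or_ne (rowNorm2 A i) 0 with h0 | h0
    · have hrow : A i = 0 := (rowNorm2_eq_zero_iff A i).mp h0
      simp [hstep, h0, hrow]
    · have hr : A i ⬝ᵥ A i = rowNorm2 A i := by
        simp [rowNorm2, dotProduct, sq]
      rw [hstep]
      simp only [dotProduct_sub, sub_dotProduct, dotProduct_smul, smul_dotProduct,
        smul_eq_mul, hr, dotProduct_comm (A i) e]
      field_simp
      ring
  simp only [key]
  have h1 : ∑ i : Fin m, (rowNorm2 A i / frob2 A * (e ⬝ᵥ e) - (A i ⬝ᵥ e) ^ 2 / frob2 A)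
      = e ⬝ᵥ e - (1 / frob2 A) * ((A *ᵥ e) ⬝ᵥ (A *ᵥ e)) := by
    rw [Finset.sum_sub_distrib]
    have ha : ∑ i : Fin m, rowNorm2 A i / frob2 A * (e ⬝ᵥ e) = e ⬝ᵥ e := by
      rw [← Finset.sum_mul, ← Finset.sum_div, ← hfrob, div_self hF, one_mul]
    have hb : ∑ i : Fin m, (A i ⬝ᵥ e) ^ 2 / frob2 A
        = (1 / frob2 A) * ((A *ᵥ e) ⬝ᵥ (A *ᵥ e)) := by
      rw [← Finset.sum_div]
      have : (A *ᵥ e) ⬝ᵥ (A *ᵥ e) = ∑ i : Fin m, (A i ⬝ᵥ e) ^ 2 := by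
        simp [dotProduct, mulVec, sq]
      rw [this]; ring
    rw [ha, hb]
  rw [h1]
  constructor
  · rw [dotProduct_sub, dotProduct_smul, smul_eq_mul,
      dotProduct_mulVec e Aᵀ, vecMul_transpose]
  · rfl
end

section
/- For the REK method, the squared-error decomposition E[||x_k - x_⋆||^2] = E[||x_k - x̂_k||^2] + E[||x̂_k - x_⋆||^2] holds, where x̂_k = x_{k-1} - ((A^{(i)}x_{k-1} - A^{(i)}x_⋆)/||A^{(i)}||^2)(A^{(i)})^T uses the same random row index i as the REK update of x_k. -/
/-!
The row step of REK moves `x_{k-1}` along the row `a = A^{(i)}`, and so does the exact projection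
`x̂_k` of `x_{k-1}` onto the hyperplane `{x | a ⬝ᵥ x = a ⬝ᵥ x⋆}`. Hence `x_k - x̂_k` is a multiple of
`a` while `x̂_k - x⋆` is orthogonal to `a`, and Pythagoras holds for every sample of indices,
before taking expectations.
-/

open Matrix BigOperators Finset

/-- One REK step: first an RK step on `Aᵀ z = 0` using column `j = p.1`, then an RK
step on `A x = b - z_k` using row `i = p.2` (with the freshly updated `z`). -/
noncomputable def rekStep {m n : ℕ} (A : Matrix (Fin m) (Fin n) ℝ)
    (b : Fin m → ℝ) (p : Fin n × Fin m) (s : (Fin m → ℝ) × (Fin n → ℝ)) :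
    (Fin m → ℝ) × (Fin n → ℝ) :=
  let z' := colStep A p.1 s.1
  (z', s.2 - ((A p.2 ⬝ᵥ s.2 - b p.2 + z' p.2) / rowNorm2 A p.2) • A p.2)

/-- REK iterates: the head of the list is the pair of indices of the most recent step. -/
noncomputable def rekIter {m n : ℕ} (A : Matrix (Fin m) (Fin n) ℝ)
    (b : Fin m → ℝ) (s0 : (Fin m → ℝ) × (Fin n → ℝ)) :
    List (Fin n × Fin m) → (Fin m → ℝ) × (Fin n → ℝ)
  | [] => s0
  | p :: l => rekStep A b p (rekIter A b s0 l)

/-- Probability of choosing the index pair `p` at a given REK step. -/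
noncomputable def rekProb {m n : ℕ} (A : Matrix (Fin m) (Fin n) ℝ)
    (p : Fin n × Fin m) : ℝ :=
  (colNorm2 A p.1 / frob2 A) * (rowNorm2 A p.2 / frob2 A)

section Pythagoras

variable {ι R : Type*} [Fintype ι]

theorem dotProduct_add_self_of_dotProduct_eq_zero [CommSemiring R] {u v : ι → R}
    (h : u ⬝ᵥ v = 0) : (u + v) ⬝ᵥ (u + v) = u ⬝ᵥ u + v ⬝ᵥ v := by
  rw [add_dotProduct, dotProduct_add, dotProduct_add, h, dotProduct_comm v u, h,
    add_zero, zero_add]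

variable [Field R]

/-- The orthogonal projection of `y` onto the hyperplane `{x | a ⬝ᵥ x = a ⬝ᵥ c}`. -/
def hyperplaneProj (a c y : ι → R) : ι → R :=
  y - ((a ⬝ᵥ (y - c)) / (a ⬝ᵥ a)) • a

theorem sub_smul_sub_hyperplaneProj (a c y : ι → R) (d : R) :
    (y - d • a) - hyperplaneProj a c y = ((a ⬝ᵥ (y - c)) / (a ⬝ᵥ a) - d) • a := by
  rw [hyperplaneProj, sub_smul]
  abel

variable [LinearOrder R] [IsStrictOrderedRing R]

theorem dotProduct_hyperplaneProj_sub (a c y : ι → R) :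
    a ⬝ᵥ (hyperplaneProj a c y - c) = 0 := by
  rcases eq_or_ne a 0 with rfl | ha
  · exact zero_dotProduct _
  have haa : a ⬝ᵥ a ≠ 0 := dotProduct_self_eq_zero.not.2 ha
  rw [hyperplaneProj, sub_right_comm, dotProduct_sub, dotProduct_smul, smul_eq_mul,
    div_mul_cancel₀ _ haa, sub_self]

theorem dotProduct_self_sub_eq_add_hyperplaneProj (a c y : ι → R) (d : R) :
    ((y - d • a) - c) ⬝ᵥ ((y - d • a) - c)
      = ((y - d • a) - hyperplaneProj a c y) ⬝ᵥ ((y - d • a) - hyperplaneProj a c y)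
        + (hyperplaneProj a c y - c) ⬝ᵥ (hyperplaneProj a c y - c) := by
  have horth : ((y - d • a) - hyperplaneProj a c y) ⬝ᵥ (hyperplaneProj a c y - c) = 0 := by
    rw [sub_smul_sub_hyperplaneProj, smul_dotProduct, dotProduct_hyperplaneProj_sub, smul_zero]
  rw [← dotProduct_add_self_of_dotProduct_eq_zero horth, sub_add_sub_cancel]

end Pythagoras

section REK

variable {m n : ℕ} (A : Matrix (Fin m) (Fin n) ℝ) (b : Fin m → ℝ)

theorem rowNorm2_eq_dotProduct (i : Fin m) : rowNorm2 A i = A i ⬝ᵥ A i := by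
  simp only [rowNorm2, dotProduct, sq]

theorem rekIter_cons_snd_eq_sub_smul (s0 : (Fin m → ℝ) × (Fin n → ℝ)) (p : Fin n × Fin m)
    (l : List (Fin n × Fin m)) :
    ∃ d : ℝ, (rekIter A b s0 (p :: l)).2 = (rekIter A b s0 l).2 - d • A p.2 :=
  ⟨_, rfl⟩

theorem rekIter_ofFn_snd_eq_sub_smul (s0 : (Fin m → ℝ) × (Fin n → ℝ)) {k : ℕ}
    (ω : Fin k → Fin n × Fin m) (hk : 0 < k) :
    ∃ d : ℝ, (rekIter A b s0 (List.ofFn ω)).2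
      = (rekIter A b s0 (List.ofFn ω).tail).2 - d • A (ω ⟨0, hk⟩).2 := by
  have hne : List.ofFn ω ≠ [] := List.ofFn_eq_nil_iff.not.2 hk.ne'
  have h := rekIter_cons_snd_eq_sub_smul A b s0 (ω ⟨0, hk⟩) (List.ofFn ω).tail
  rwa [← List.head_ofFn hne, List.cons_head_tail, List.head_ofFn] at h

end REK

theorem rek_squared_error_decomposition_general {m n : ℕ}
    (A : Matrix (Fin m) (Fin n) ℝ)
    (b : Fin m → ℝ) (xs : Fin n → ℝ)
    (x0 : Fin n → ℝ)
    (z0 : Fin m → ℝ)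
    (k : ℕ) (hk : 0 < k) :
    ∑ ω : Fin k → Fin n × Fin m,
        (∏ t, rekProb A (ω t)) *
          (((rekIter A b (z0, x0) (List.ofFn ω)).2 - xs) ⬝ᵥ
            ((rekIter A b (z0, x0) (List.ofFn ω)).2 - xs))
      = (∑ ω : Fin k → Fin n × Fin m,
          (∏ t, rekProb A (ω t)) *
            (((rekIter A b (z0, x0) (List.ofFn ω)).2
                - ((rekIter A b (z0, x0) ((List.ofFn ω).tail)).2
                    - ((A (ω ⟨0, hk⟩).2 ⬝ᵥ
                          ((rekIter A b (z0, x0) ((List.ofFn ω).tail)).2 - xs))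
                        / rowNorm2 A (ω ⟨0, hk⟩).2) • A (ω ⟨0, hk⟩).2)) ⬝ᵥ
              ((rekIter A b (z0, x0) (List.ofFn ω)).2
                - ((rekIter A b (z0, x0) ((List.ofFn ω).tail)).2
                    - ((A (ω ⟨0, hk⟩).2 ⬝ᵥ
                          ((rekIter A b (z0, x0) ((List.ofFn ω).tail)).2 - xs))
                        / rowNorm2 A (ω ⟨0, hk⟩).2) • A (ω ⟨0, hk⟩).2))))
        + ∑ ω : Fin k → Fin n × Fin m,
            (∏ t, rekProb A (ω t)) *
              ((((rekIter A b (z0, x0) ((List.ofFn ω).tail)).2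
                    - ((A (ω ⟨0, hk⟩).2 ⬝ᵥ
                          ((rekIter A b (z0, x0) ((List.ofFn ω).tail)).2 - xs))
                        / rowNorm2 A (ω ⟨0, hk⟩).2) • A (ω ⟨0, hk⟩).2) - xs) ⬝ᵥ
                (((rekIter A b (z0, x0) ((List.ofFn ω).tail)).2
                    - ((A (ω ⟨0, hk⟩).2 ⬝ᵥ
                          ((rekIter A b (z0, x0) ((List.ofFn ω).tail)).2 - xs))
                        / rowNorm2 A (ω ⟨0, hk⟩).2) • A (ω ⟨0, hk⟩).2) - xs)) := by
  rw [← Finset.sum_add_distrib]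
  refine Finset.sum_congr rfl fun ω _ => ?_
  rw [← mul_add, rowNorm2_eq_dotProduct]
  obtain ⟨d, hd⟩ := rekIter_ofFn_snd_eq_sub_smul A b (z0, x0) ω hk
  rw [hd]
  exact congrArg _ (dotProduct_self_sub_eq_add_hyperplaneProj (A (ω ⟨0, hk⟩).2) xs _ d)

/-- Pythagorean decomposition of the REK squared error,
`E[‖x_k - x⋆‖²] = E[‖x_k - x̂_k‖²] + E[‖x̂_k - x⋆‖²]`, where `x̂_k` is the one-step
RK update for `A x = A x⋆` from `x_{k-1}` using the same row index `(ω 0).2` as the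
`k`-th REK step (the head entry of the sample `ω` being the most recent step). -/
theorem rek_squared_error_decomposition {m n : ℕ}
    (A : Matrix (Fin m) (Fin n) ℝ) (hA : A ≠ 0)
    (b : Fin m → ℝ) (xs : Fin n → ℝ)
    (hls : Aᵀ *ᵥ (b - A *ᵥ xs) = 0) (hxs : ∃ y, xs = Aᵀ *ᵥ y)
    (x0 : Fin n → ℝ) (hx0 : ∃ u, x0 = Aᵀ *ᵥ u)
    (z0 : Fin m → ℝ) (hz0 : ∃ y, z0 = b + A *ᵥ y)
    (k : ℕ) (hk : 0 < k) :
    ∑ ω : Fin k → Fin n × Fin m,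
        (∏ t, rekProb A (ω t)) *
          (((rekIter A b (z0, x0) (List.ofFn ω)).2 - xs) ⬝ᵥ
            ((rekIter A b (z0, x0) (List.ofFn ω)).2 - xs))
      = (∑ ω : Fin k → Fin n × Fin m,
          (∏ t, rekProb A (ω t)) *
            (((rekIter A b (z0, x0) (List.ofFn ω)).2
                - ((rekIter A b (z0, x0) ((List.ofFn ω).tail)).2
                    - ((A (ω ⟨0, hk⟩).2 ⬝ᵥ
                          ((rekIter A b (z0, x0) ((List.ofFn ω).tail)).2 - xs))
                        / rowNorm2 A (ω ⟨0, hk⟩).2) • A (ω ⟨0, hk⟩).2)) ⬝ᵥ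
              ((rekIter A b (z0, x0) (List.ofFn ω)).2
                - ((rekIter A b (z0, x0) ((List.ofFn ω).tail)).2
                    - ((A (ω ⟨0, hk⟩).2 ⬝ᵥ
                          ((rekIter A b (z0, x0) ((List.ofFn ω).tail)).2 - xs))
                        / rowNorm2 A (ω ⟨0, hk⟩).2) • A (ω ⟨0, hk⟩).2))))
        + ∑ ω : Fin k → Fin n × Fin m,
            (∏ t, rekProb A (ω t)) *
              ((((rekIter A b (z0, x0) ((List.ofFn ω).tail)).2
                    - ((A (ω ⟨0, hk⟩).2 ⬝ᵥ
                          ((rekIter A b (z0, x0) ((List.ofFn ω).tail)).2 - xs))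
                        / rowNorm2 A (ω ⟨0, hk⟩).2) • A (ω ⟨0, hk⟩).2) - xs) ⬝ᵥ
                (((rekIter A b (z0, x0) ((List.ofFn ω).tail)).2
                    - ((A (ω ⟨0, hk⟩).2 ⬝ᵥ
                          ((rekIter A b (z0, x0) ((List.ofFn ω).tail)).2 - xs))
                        / rowNorm2 A (ω ⟨0, hk⟩).2) • A (ω ⟨0, hk⟩).2) - xs)) :=
  rek_squared_error_decomposition_general A b xs x0 z0 k hk
end
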